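/- (Quasi-invariance, Theorem 2.1, second form, including the linearity property (2.7).) Let h^1,…,h^m : ℝ → ℝ be smooth bounded functions, let L^h_t f = Lf + ∑_{i=1}^m h^i(t)⟨X_i, ∇f⟩, and let L̃^h_t be the operator on smooth functions of (x,u) ∈ ℝ^d × ℝ given by L̃^h_t F(x,u) = ⟨X_0(x), ∇_x F⟩ + (1/2)∑_{i=1}^m ⟨DX_i(x)X_i(x), ∇_x F⟩ + (1/2)∑_{i=1}^m ⟨X̃_i^t(x,u), Hess F X̃_i^t(x,u)⟩ with X̃_i^t(x,u) = (X_i(x), h^i(t)·u). Fix T > 0 and a smooth bounded f : ℝ^d → ℝ. Suppose: (i) F : [0,T] × ℝ^d → ℝ is bounded, smooth, and satisfies ∂_t F = L^h_t F with F(0,·) = f; (ii) G : [0,T] × ℝ^{d+1} → ℝ is smooth, satisfies ∂_t G = L̃^h_t G with G(0,x,u) = u·f(x), and |G(t,x,u)| ≤ C(1+|u|) for some constant C; (iii) any two smooth solutions H : [0,T] × ℝ^{d+1} → ℝ of ∂_t H = L̃^h_t H with the same initial condition and satisfying a bound |H(t,x,u)| ≤ C'(1+|u|) coincide. Then G(t,x,u)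 = u·F(t,x) for all (t,x,u); in particular G(t,x,u) = u·G(t,x,1) and F(t,x) = G(t,x,1). -/

import Mathlib

open scoped BigOperators

lemma keyA {d : ℕ} (φ : (Fin d → ℝ) → ℝ) (hφ : ContDiff ℝ (⊤ : ℕ∞) φ)
    (p : (Fin d → ℝ) × ℝ) (v : Fin d → ℝ) (w : ℝ) :
    fderiv ℝ (fun q : (Fin d → ℝ) × ℝ => q.2 * φ q.1) p (v, w)
      = w * φ p.1 + p.2 * fderiv ℝ φ p.1 v := by
  have h2 : HasFDerivAt (fun q : (Fin d → ℝ) × ℝ => φ q.1)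
      ((fderiv ℝ φ p.1).comp (ContinuousLinearMap.fst ℝ (Fin d → ℝ) ℝ)) p :=
    ((hφ.differentiable (by simp) p.1).hasFDerivAt).comp p hasFDerivAt_fst
  have h1 : HasFDerivAt (fun q : (Fin d → ℝ) × ℝ => q.2)
      (ContinuousLinearMap.snd ℝ (Fin d → ℝ) ℝ) p := hasFDerivAt_snd
  rw [HasFDerivAt.fderiv (f := fun q : (Fin d → ℝ) × ℝ => q.2 * φ q.1) (h1.mul h2)]
  simp
  ring

lemma keyD {d : ℕ} (φ : (Fin d → ℝ) → ℝ) (hφ : ContDiff ℝ (⊤ : ℕ∞) φ) (a : Fin d → ℝ) :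
    ContDiff ℝ (⊤ : ℕ∞) (fun y => fderiv ℝ φ y a) :=
  (ContinuousLinearMap.apply ℝ ℝ a).contDiff.comp (hφ.fderiv_right (by simp))

lemma keyB {d : ℕ} (φ : (Fin d → ℝ) → ℝ) (hφ : ContDiff ℝ (⊤ : ℕ∞) φ)
    (p : (Fin d → ℝ) × ℝ) (a : Fin d → ℝ) (b : ℝ) :
    fderiv ℝ (fun q : (Fin d → ℝ) × ℝ =>
        fderiv ℝ (fun r : (Fin d → ℝ) × ℝ => r.2 * φ r.1) q (a, b)) p (a, b)
      = 2 * b * fderiv ℝ φ p.1 a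
        + p.2 * fderiv ℝ (fun y => fderiv ℝ φ y a) p.1 a := by
  have hg : ContDiff ℝ (⊤ : ℕ∞) (fun y => fderiv ℝ φ y a) := keyD φ hφ a
  have heq : (fun q : (Fin d → ℝ) × ℝ =>
      fderiv ℝ (fun r : (Fin d → ℝ) × ℝ => r.2 * φ r.1) q (a, b))
      = fun q => b * φ q.1 + q.2 * (fderiv ℝ φ q.1 a) :=
    funext fun q => keyA φ hφ q a b
  rw [heq]
  have h1 : HasFDerivAt (fun q : (Fin d → ℝ) × ℝ => b * φ q.1)
      (b • ((fderiv ℝ φ p.1).comp (ContinuousLinearMap.fst ℝ (Fin d → ℝ) ℝ))) p :=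
    (((hφ.differentiable (by simp) p.1).hasFDerivAt).comp p hasFDerivAt_fst).const_mul b
  have h2 : HasFDerivAt (fun q : (Fin d → ℝ) × ℝ => q.2 * (fderiv ℝ φ q.1 a))
      (p.2 • ((fderiv ℝ (fun y => fderiv ℝ φ y a) p.1).comp
          (ContinuousLinearMap.fst ℝ (Fin d → ℝ) ℝ))
        + (fderiv ℝ φ p.1 a) • ContinuousLinearMap.snd ℝ (Fin d → ℝ) ℝ) p :=
    hasFDerivAt_snd.mul
      (((hg.differentiable (by simp) p.1).hasFDerivAt).comp p hasFDerivAt_fst)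
  rw [HasFDerivAt.fderiv (f := fun q : (Fin d → ℝ) × ℝ => b * φ q.1 + q.2 * (fderiv ℝ φ q.1 a)) (h1.add h2)]
  simp
  ring


/-- Bounded derivatives of all orders (order ≥ 1). -/
def BoundedDerivs {d : ℕ} (X : (Fin d → ℝ) → Fin d → ℝ) : Prop :=
  ∀ n : ℕ, 1 ≤ n → ∃ C : ℝ, ∀ x, ‖iteratedFDeriv ℝ n X x‖ ≤ C

/-- The Hörmander-type operator `L`. -/
noncomputable def hormanderL {d m : ℕ} (X : Fin (m + 1) → (Fin d → ℝ) → Fin d → ℝ)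
    (f : (Fin d → ℝ) → ℝ) (x : Fin d → ℝ) : ℝ :=
  fderiv ℝ f x (X 0 x)
    + (1 / 2) * ∑ i : Fin m, fderiv ℝ f x (fderiv ℝ (X i.succ) x (X i.succ x))
    + (1 / 2) * ∑ i : Fin m,
        fderiv ℝ (fun y => fderiv ℝ f y (X i.succ x)) x (X i.succ x)

/-- The perturbed operator `L^h_t f = Lf + ∑ᵢ hⁱ(t) ⟨Xᵢ, ∇f⟩`. -/
noncomputable def perturbedL {d m : ℕ} (X : Fin (m + 1) → (Fin d → ℝ) → Fin d → ℝ)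
    (h : Fin m → ℝ → ℝ) (t : ℝ) (f : (Fin d → ℝ) → ℝ) (x : Fin d → ℝ) : ℝ :=
  hormanderL X f x + ∑ i : Fin m, h i t * fderiv ℝ f x (X i.succ x)

/-- The operator `L̃^h_t` on functions of `(x,u)`, built from `X̃ᵢᵗ(x,u) = (Xᵢ(x), hⁱ(t)·u)`. -/
noncomputable def tildeL {d m : ℕ} (X : Fin (m + 1) → (Fin d → ℝ) → Fin d → ℝ)
    (h : Fin m → ℝ → ℝ) (t : ℝ) (F : (Fin d → ℝ) × ℝ → ℝ) (p : (Fin d → ℝ) × ℝ) : ℝ :=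
  fderiv ℝ F p (X 0 p.1, 0)
    + (1 / 2) * ∑ i : Fin m, fderiv ℝ F p (fderiv ℝ (X i.succ) p.1 (X i.succ p.1), 0)
    + (1 / 2) * ∑ i : Fin m,
        fderiv ℝ (fun q => fderiv ℝ F q (X i.succ p.1, h i t * p.2)) p
          (X i.succ p.1, h i t * p.2)

/-- `H` is a smooth solution of `∂ₜH = L̃^h_t H` on `[0,T] × ℝ^{d+1}` with at most linear
growth in `u`, i.e. `|H(t,x,u)| ≤ C'(1+|u|)`. -/
def IsLinGrowthSolTilde {d m : ℕ} (X : Fin (m + 1) → (Fin d → ℝ) → Fin d → ℝ)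
    (h : Fin m → ℝ → ℝ) (T : ℝ) (H : ℝ → (Fin d → ℝ) × ℝ → ℝ) : Prop :=
  (∃ C' : ℝ, ∀ t ∈ Set.Icc (0 : ℝ) T, ∀ (x : Fin d → ℝ) (u : ℝ),
      |H t (x, u)| ≤ C' * (1 + |u|)) ∧
  ContDiffOn ℝ (⊤ : ℕ∞) (fun p : ℝ × ((Fin d → ℝ) × ℝ) => H p.1 p.2)
    (Set.Icc (0 : ℝ) T ×ˢ Set.univ) ∧
  ∀ t ∈ Set.Icc (0 : ℝ) T, ∀ (x : Fin d → ℝ) (u : ℝ),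
    HasDerivWithinAt (fun s => H s (x, u)) (tildeL X h t (H t) (x, u)) (Set.Icc (0 : ℝ) T) t


lemma keyMain {d m : ℕ} (X : Fin (m + 1) → (Fin d → ℝ) → Fin d → ℝ)
    (h : Fin m → ℝ → ℝ) (t : ℝ) (φ : (Fin d → ℝ) → ℝ) (hφ : ContDiff ℝ (⊤ : ℕ∞) φ)
    (p : (Fin d → ℝ) × ℝ) :
    tildeL X h t (fun q : (Fin d → ℝ) × ℝ => q.2 * φ q.1) p
      = p.2 * perturbedL X h t φ p.1 := by
  unfold tildeL perturbedL hormanderL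
  have S1 := keyA φ hφ p (X 0 p.1) 0
  have S2 : ∑ i : Fin m, fderiv ℝ (fun q : (Fin d → ℝ) × ℝ => q.2 * φ q.1) p
        (fderiv ℝ (X i.succ) p.1 (X i.succ p.1), 0)
      = ∑ i : Fin m, (0 * φ p.1 + p.2 * fderiv ℝ φ p.1 (fderiv ℝ (X i.succ) p.1 (X i.succ p.1))) :=
    Finset.sum_congr rfl fun i _ => keyA φ hφ p _ 0
  have S3 : ∑ i : Fin m, fderiv ℝ (fun q : (Fin d → ℝ) × ℝ =>
        fderiv ℝ (fun r : (Fin d → ℝ) × ℝ => r.2 * φ r.1) q (X i.succ p.1, h i t * p.2)) p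
        (X i.succ p.1, h i t * p.2)
      = ∑ i : Fin m, (2 * (h i t * p.2) * fderiv ℝ φ p.1 (X i.succ p.1)
          + p.2 * fderiv ℝ (fun y => fderiv ℝ φ y (X i.succ p.1)) p.1 (X i.succ p.1)) :=
    Finset.sum_congr rfl fun i _ => keyB φ hφ p _ _
  rw [S1, S2, S3, Finset.sum_add_distrib, Finset.sum_add_distrib]
  have e1 : ∑ i : Fin m, 2 * (h i t * p.2) * fderiv ℝ φ p.1 (X i.succ p.1)
      = 2 * p.2 * ∑ i : Fin m, h i t * fderiv ℝ φ p.1 (X i.succ p.1) := by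
    rw [Finset.mul_sum]; exact Finset.sum_congr rfl fun i _ => by ring
  have e2 : ∑ i : Fin m, p.2 * fderiv ℝ (fun y => fderiv ℝ φ y (X i.succ p.1)) p.1 (X i.succ p.1)
      = p.2 * ∑ i : Fin m, fderiv ℝ (fun y => fderiv ℝ φ y (X i.succ p.1)) p.1 (X i.succ p.1) :=
    (Finset.mul_sum _ _ _).symm
  have e3 : ∑ i : Fin m, p.2 * fderiv ℝ φ p.1 (fderiv ℝ (X i.succ) p.1 (X i.succ p.1))
      = p.2 * ∑ i : Fin m, fderiv ℝ φ p.1 (fderiv ℝ (X i.succ) p.1 (X i.succ p.1)) :=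
    (Finset.mul_sum _ _ _).symm
  rw [e1, e2, e3]
  simp only [zero_mul, Finset.sum_const_zero, zero_add, add_zero]
  ring

/-- Theorem 2.1 (Quasi-invariance), second form, including the linearity property (2.7):
`G(t,x,u) = u·F(t,x)`; in particular `G(t,x,u) = u·G(t,x,1)` and `F(t,x) = G(t,x,1)`. -/
theorem quasi_invariance' (d m : ℕ) (hd : 0 < d) (hm : 0 < m)
    (X : Fin (m + 1) → (Fin d → ℝ) → Fin d → ℝ)
    (hXsmooth : ∀ i, ContDiff ℝ (⊤ : ℕ∞) (X i)) (hXbdd : ∀ i, BoundedDerivs (X i))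
    (h : Fin m → ℝ → ℝ) (hhsmooth : ∀ i, ContDiff ℝ (⊤ : ℕ∞) (h i))
    (hhbdd : ∀ i, ∃ C : ℝ, ∀ t, |h i t| ≤ C)
    (T : ℝ) (hT : 0 < T)
    (f : (Fin d → ℝ) → ℝ) (hfsmooth : ContDiff ℝ (⊤ : ℕ∞) f) (hfbdd : ∃ C : ℝ, ∀ x, |f x| ≤ C)
    -- (i) F is a bounded smooth solution of ∂ₜF = L^h_t F with F(0,·) = f
    (F : ℝ → (Fin d → ℝ) → ℝ)
    (hFbdd : ∃ C : ℝ, ∀ t ∈ Set.Icc (0 : ℝ) T, ∀ x, |F t x| ≤ C)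
    (hFsmooth : ContDiffOn ℝ (⊤ : ℕ∞) (fun p : ℝ × (Fin d → ℝ) => F p.1 p.2)
      (Set.Icc (0 : ℝ) T ×ˢ Set.univ))
    (hFpde : ∀ t ∈ Set.Icc (0 : ℝ) T, ∀ x,
      HasDerivWithinAt (fun s => F s x) (perturbedL X h t (F t) x) (Set.Icc (0 : ℝ) T) t)
    (hF0 : ∀ x, F 0 x = f x)
    -- (ii) G is a smooth solution of ∂ₜG = L̃^h_t G with G(0,x,u) = u·f(x)
    -- and |G(t,x,u)| ≤ C(1+|u|)
    (G : ℝ → (Fin d → ℝ) × ℝ → ℝ)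
    (hG : IsLinGrowthSolTilde X h T G)
    (hG0 : ∀ (x : Fin d → ℝ) (u : ℝ), G 0 (x, u) = u * f x)
    -- (iii) uniqueness of smooth solutions of ∂ₜH = L̃^h_t H of linear growth in u
    (huniq : ∀ H₁ H₂ : ℝ → (Fin d → ℝ) × ℝ → ℝ,
      IsLinGrowthSolTilde X h T H₁ → IsLinGrowthSolTilde X h T H₂ → H₁ 0 = H₂ 0 →
      ∀ t ∈ Set.Icc (0 : ℝ) T, H₁ t = H₂ t) :
    ∀ t ∈ Set.Icc (0 : ℝ) T, ∀ (x : Fin d → ℝ) (u : ℝ),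
      G t (x, u) = u * F t x ∧ G t (x, u) = u * G t (x, 1) ∧ F t x = G t (x, 1) := by
  obtain ⟨C, hC⟩ := hFbdd
  have hCnn : 0 ≤ C := le_trans (abs_nonneg _) (hC 0 ⟨le_refl 0, le_of_lt hT⟩ 0)
  have hFt : ∀ t ∈ Set.Icc (0 : ℝ) T, ContDiff ℝ (⊤ : ℕ∞) (F t) := by
    intro t ht
    have : ContDiffOn ℝ (⊤ : ℕ∞) (fun x : Fin d → ℝ => F t x) Set.univ :=
      hFsmooth.comp ((contDiff_const.prodMk contDiff_id).contDiffOn)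
        (fun x _ => ⟨ht, trivial⟩)
    exact contDiffOn_univ.mp this
  have hHsol : IsLinGrowthSolTilde X h T (fun s (p : (Fin d → ℝ) × ℝ) => p.2 * F s p.1) := by
    refine ⟨⟨C, ?_⟩, ?_, ?_⟩
    · intro t ht x u
      have h1 : |u * F t x| ≤ |u| * C := by
        rw [abs_mul]
        exact mul_le_mul_of_nonneg_left (hC t ht x) (abs_nonneg u)
      nlinarith [abs_nonneg u]
    · have hπ : ContDiff ℝ (⊤ : ℕ∞) (fun p : ℝ × ((Fin d → ℝ) × ℝ) => (p.1, p.2.1)) :=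
        contDiff_fst.prodMk (contDiff_snd.fst)
      have hcomp : ContDiffOn ℝ (⊤ : ℕ∞) (fun p : ℝ × ((Fin d → ℝ) × ℝ) => F p.1 p.2.1)
          (Set.Icc (0 : ℝ) T ×ˢ Set.univ) :=
        hFsmooth.comp hπ.contDiffOn (fun p hp => ⟨hp.1, trivial⟩)
      exact (contDiff_snd.snd.contDiffOn).mul hcomp
    · intro t ht x u
      show HasDerivWithinAt (fun s => u * F s x)
        (tildeL X h t (fun p : (Fin d → ℝ) × ℝ => p.2 * F t p.1) (x, u))
        (Set.Icc (0 : ℝ) T) t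
      rw [keyMain X h t (F t) (hFt t ht) (x, u)]
      exact (hFpde t ht x).const_mul u
  have h0 : G 0 = fun p : (Fin d → ℝ) × ℝ => p.2 * F 0 p.1 := by
    funext p
    obtain ⟨x, u⟩ := p
    rw [hG0 x u, hF0 x]
  intro t ht x u
  have hGt := huniq G (fun s (p : (Fin d → ℝ) × ℝ) => p.2 * F s p.1) hG hHsol h0 t ht
  have e1 : G t (x, u) = u * F t x := congrFun hGt (x, u)
  have e2 : G t (x, 1) = 1 * F t x := congrFun hGt (x, 1)
  refine ⟨e1, ?_, ?_⟩
  · rw [e1, e2]; ring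
  · rw [e2]; ring
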